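/- arXiv:1801.06773 — 2 statements merged into one kernel-verified Lean document; each statement's English description precedes it below -/
import Mathlib

section
/- Let n, m be positive integers, R > 0, C ≥ 0, and let h : ℝⁿ → ℝᵐ satisfy |h(x) − h(y)| ≤ C|x − y| for all x, y ∈ ℝⁿ with |x| ≤ R and |y| ≤ R. Define the radial truncation h^R : ℝⁿ → ℝᵐ by h^R(x) = h(x) if |x| ≤ R, h^R(x) = ((2R − |x|)/R) · h(Rx/|x|) if R ≤ |x| ≤ 2R, and h^R(x) = 0 if |x| ≥ 2R. Then h^R is globally Lipschitz on ℝⁿ, i.e. there exists a constant C' ≥ 0 such that |h^R(x) − h^R(y)| ≤ C'|x − y| for all x, y ∈ ℝⁿ. -/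
/-- Radial truncation of a function `h` at radius `R`:
`h^R(x) = h(x)` if `‖x‖ ≤ R`, `h^R(x) = ((2R - ‖x‖)/R) • h((R/‖x‖) • x)` if `R ≤ ‖x‖ ≤ 2R`,
and `h^R(x) = 0` if `‖x‖ ≥ 2R`. -/
noncomputable def radialTrunc {E V : Type*} [NormedAddCommGroup E] [NormedSpace ℝ E]
    [NormedAddCommGroup V] [NormedSpace ℝ V] (R : ℝ) (h : E → V) (x : E) : V :=
  if ‖x‖ ≤ R then h x
  else if ‖x‖ ≤ 2 * R then ((2 * R - ‖x‖) / R) • h ((R / ‖x‖) • x)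
  else 0

theorem stmt_0 (n m : ℕ) (hn : 0 < n) (hm : 0 < m) (R C : ℝ) (hR : 0 < R) (hC : 0 ≤ C)
    (h : EuclideanSpace ℝ (Fin n) → EuclideanSpace ℝ (Fin m))
    (hLip : ∀ x y : EuclideanSpace ℝ (Fin n),
      ‖x‖ ≤ R → ‖y‖ ≤ R → ‖h x - h y‖ ≤ C * ‖x - y‖) :
    ∃ C' : ℝ, 0 ≤ C' ∧ ∀ x y : EuclideanSpace ℝ (Fin n),
      ‖radialTrunc R h x - radialTrunc R h y‖ ≤ C' * ‖x - y‖ := by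
  classical
  let E := EuclideanSpace ℝ (Fin n)
  set proj : E → E := fun x => if ‖x‖ ≤ R then x else (R / ‖x‖) • x with hprojdef
  set lam : E → ℝ := fun x => max 0 (min 1 ((2 * R - ‖x‖) / R)) with hlamdef
  -- proj lands in the ball of radius R
  have hprojnorm : ∀ x : E, ‖proj x‖ ≤ R := by
    intro x
    simp only [hprojdef]
    split_ifs with hx
    · exact hx
    · push_neg at hx
      have hx0 : (0:ℝ) < ‖x‖ := hR.trans hx
      rw [norm_smul, Real.norm_eq_abs, abs_of_nonneg (by positivity),
        div_mul_cancel₀ _ hx0.ne']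
  -- helper for the mixed case
  have hmix : ∀ x y : E, ‖x‖ ≤ R → R < ‖y‖ → ‖x - (R / ‖y‖) • y‖ ≤ 2 * ‖x - y‖ := by
    intro x y hx hy
    have hy0 : (0:ℝ) < ‖y‖ := hR.trans hy
    have h1 : ‖y - (R / ‖y‖) • y‖ = ‖y‖ - R := by
      have : y - (R / ‖y‖) • y = (1 - R / ‖y‖) • y := by
        rw [sub_smul, one_smul]
      rw [this, norm_smul, Real.norm_eq_abs,
        abs_of_nonneg (by rw [sub_nonneg, div_le_one hy0]; exact hy.le),
        sub_mul, one_mul, div_mul_cancel₀ _ hy0.ne']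
    have h2 : ‖y‖ - R ≤ ‖x - y‖ := by
      have := norm_sub_norm_le y x
      rw [show y - x = -(x - y) from (neg_sub x y).symm, norm_neg] at this
      linarith
    calc ‖x - (R / ‖y‖) • y‖ ≤ ‖x - y‖ + ‖y - (R / ‖y‖) • y‖ := by
          have := norm_add_le (x - y) (y - (R / ‖y‖) • y)
          simpa [sub_add_sub_cancel] using this
      _ ≤ 2 * ‖x - y‖ := by rw [h1]; linarith
  -- proj is 2-Lipschitz
  have hprojLip : ∀ x y : E, ‖proj x - proj y‖ ≤ 2 * ‖x - y‖ := by
    intro x y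
    simp only [hprojdef]
    split_ifs with hx hy hy
    · linarith [norm_nonneg (x - y)]
    · exact hmix x y hx (not_le.1 hy)
    · rw [norm_sub_rev, show ‖x - y‖ = ‖y - x‖ from (norm_sub_rev x y)]
      exact hmix y x hy (not_le.1 hx)
    · push_neg at hx hy
      have hx0 : (0:ℝ) < ‖x‖ := hR.trans hx
      have hy0 : (0:ℝ) < ‖y‖ := hR.trans hy
      have key : (R / ‖x‖) • x - (R / ‖y‖) • y
          = (R / ‖x‖) • (x - y) + (R / ‖x‖ - R / ‖y‖) • y := by
        rw [smul_sub, sub_smul]; abel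
      rw [key]
      have hb : ‖(R / ‖x‖ - R / ‖y‖) • y‖ ≤ ‖x - y‖ := by
        rw [norm_smul, Real.norm_eq_abs]
        have heq : R / ‖x‖ - R / ‖y‖ = R * (‖y‖ - ‖x‖) / (‖x‖ * ‖y‖) := by
          field_simp
        rw [heq, abs_div, abs_mul, abs_of_pos hR,
          abs_of_nonneg (mul_nonneg hx0.le hy0.le)]
        have h3 : |‖y‖ - ‖x‖| ≤ ‖x - y‖ := by
          rw [abs_sub_comm]
          exact abs_norm_sub_norm_le x y
        rw [div_mul_eq_mul_div, div_le_iff₀ (by positivity)]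
        have h4 := abs_nonneg (‖y‖ - ‖x‖)
        calc R * |‖y‖ - ‖x‖| * ‖y‖ ≤ ‖x‖ * ‖x - y‖ * ‖y‖ := by
              apply mul_le_mul_of_nonneg_right _ hy0.le
              exact mul_le_mul hx.le h3 h4 hx0.le
          _ = ‖x - y‖ * (‖x‖ * ‖y‖) := by ring
      have ha : ‖(R / ‖x‖) • (x - y)‖ ≤ ‖x - y‖ := by
        rw [norm_smul, Real.norm_eq_abs, abs_of_pos (by positivity)]
        have : R / ‖x‖ ≤ 1 := by rw [div_le_one hx0]; exact hx.le
        nlinarith [norm_nonneg (x - y)]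
      calc ‖(R / ‖x‖) • (x - y) + (R / ‖x‖ - R / ‖y‖) • y‖
          ≤ ‖(R / ‖x‖) • (x - y)‖ + ‖(R / ‖x‖ - R / ‖y‖) • y‖ := norm_add_le _ _
        _ ≤ 2 * ‖x - y‖ := by linarith
  -- lam is bounded by 1 and nonneg
  have hlam01 : ∀ x : E, 0 ≤ lam x ∧ lam x ≤ 1 := by
    intro x
    refine ⟨le_max_left _ _, ?_⟩
    simp only [hlamdef]
    exact max_le zero_le_one (min_le_left _ _)
  -- lam is (1/R)-Lipschitz
  have hlamLip : ∀ x y : E, |lam x - lam y| ≤ ‖x - y‖ / R := by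
    intro x y
    simp only [hlamdef]
    have h1 := abs_max_sub_max_le_max (0:ℝ) (min 1 ((2 * R - ‖x‖) / R)) 0
      (min 1 ((2 * R - ‖y‖) / R))
    have h2 := abs_min_sub_min_le_max (1:ℝ) ((2 * R - ‖x‖) / R) 1 ((2 * R - ‖y‖) / R)
    simp only [sub_self, abs_zero] at h1 h2
    have h3 : |(2 * R - ‖x‖) / R - (2 * R - ‖y‖) / R| ≤ ‖x - y‖ / R := by
      rw [div_sub_div_same, abs_div, abs_of_pos hR,
        show 2 * R - ‖x‖ - (2 * R - ‖y‖) = ‖y‖ - ‖x‖ by ring]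
      gcongr
      rw [abs_sub_comm]
      exact abs_norm_sub_norm_le x y
    have h4 : max (0:ℝ) |(2 * R - ‖x‖) / R - (2 * R - ‖y‖) / R| =
        |(2 * R - ‖x‖) / R - (2 * R - ‖y‖) / R| := max_eq_right (abs_nonneg _)
    calc |max 0 (min 1 ((2 * R - ‖x‖) / R)) - max 0 (min 1 ((2 * R - ‖y‖) / R))|
        ≤ max 0 |min 1 ((2 * R - ‖x‖) / R) - min 1 ((2 * R - ‖y‖) / R)| := h1
      _ = |min 1 ((2 * R - ‖x‖) / R) - min 1 ((2 * R - ‖y‖) / R)| :=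
          max_eq_right (abs_nonneg _)
      _ ≤ max 0 |(2 * R - ‖x‖) / R - (2 * R - ‖y‖) / R| := h2
      _ = _ := h4
      _ ≤ ‖x - y‖ / R := h3
  -- radialTrunc equals lam • h ∘ proj
  have hkey : ∀ x : E, radialTrunc R h x = lam x • h (proj x) := by
    intro x
    simp only [radialTrunc, hlamdef, hprojdef]
    split_ifs with hx hx2
    · have : (1:ℝ) ≤ (2 * R - ‖x‖) / R := by
        rw [le_div_iff₀ hR]; linarith
      rw [min_eq_left this, max_eq_right zero_le_one, one_smul]
    · push_neg at hx
      have h1 : (2 * R - ‖x‖) / R ≤ 1 := by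
        rw [div_le_one hR]; linarith
      have h2 : (0:ℝ) ≤ (2 * R - ‖x‖) / R := by
        apply div_nonneg _ hR.le; linarith
      rw [min_eq_right h1, max_eq_right h2]
    · push_neg at hx hx2
      have : (2 * R - ‖x‖) / R < 0 := by
        apply div_neg_of_neg_of_pos _ hR; linarith
      rw [min_eq_right (this.le.trans zero_le_one), max_eq_left this.le, zero_smul]
  -- bound on h ∘ proj
  have hM : ∀ x : E, ‖h (proj x)‖ ≤ ‖h 0‖ + C * R := by
    intro x
    have h0 : ‖(0:E)‖ ≤ R := by rw [norm_zero]; exact hR.le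
    have := hLip (proj x) 0 (hprojnorm x) h0
    rw [sub_zero] at this
    have h2 := norm_sub_norm_le (h (proj x)) (h 0)
    have h3 : C * ‖proj x‖ ≤ C * R := mul_le_mul_of_nonneg_left (hprojnorm x) hC
    linarith
  refine ⟨2 * C + (‖h 0‖ + C * R) / R, by positivity, fun x y => ?_⟩
  rw [hkey x, hkey y]
  have hsplit : lam x • h (proj x) - lam y • h (proj y)
      = lam x • (h (proj x) - h (proj y)) + (lam x - lam y) • h (proj y) := by
    rw [smul_sub, sub_smul]; abel
  rw [hsplit]
  have h1 : ‖lam x • (h (proj x) - h (proj y))‖ ≤ 2 * C * ‖x - y‖ := by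
    rw [norm_smul, Real.norm_eq_abs, abs_of_nonneg (hlam01 x).1]
    have hg : ‖h (proj x) - h (proj y)‖ ≤ C * (2 * ‖x - y‖) :=
      (hLip _ _ (hprojnorm x) (hprojnorm y)).trans
        (mul_le_mul_of_nonneg_left (hprojLip x y) hC)
    calc lam x * ‖h (proj x) - h (proj y)‖ ≤ 1 * (C * (2 * ‖x - y‖)) := by
          apply mul_le_mul (hlam01 x).2 hg (norm_nonneg _) zero_le_one
      _ = 2 * C * ‖x - y‖ := by ring
  have h2 : ‖(lam x - lam y) • h (proj y)‖ ≤ (‖h 0‖ + C * R) / R * ‖x - y‖ := by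
    rw [norm_smul, Real.norm_eq_abs]
    have hM0 : (0:ℝ) ≤ ‖h 0‖ + C * R := by positivity
    calc |lam x - lam y| * ‖h (proj y)‖ ≤ (‖x - y‖ / R) * (‖h 0‖ + C * R) := by
          apply mul_le_mul (hlamLip x y) (hM y) (norm_nonneg _) (by positivity)
      _ = (‖h 0‖ + C * R) / R * ‖x - y‖ := by ring
  calc ‖lam x • (h (proj x) - h (proj y)) + (lam x - lam y) • h (proj y)‖
      ≤ ‖lam x • (h (proj x) - h (proj y))‖ + ‖(lam x - lam y) • h (proj y)‖ :=
        norm_add_le _ _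
    _ ≤ (2 * C + (‖h 0‖ + C * R) / R) * ‖x - y‖ := by rw [add_mul]; linarith
end

section
/- Let (X, 𝒜, ν) be a measure space, d a positive integer, R > 0, and C, B ≥ 0. Let F : ℝᵈ × X → ℝᵈ be such that x ↦ F(z, x) is measurable for each z, and suppose that (a) for all z₁, z₂ ∈ ℝᵈ with |z₁| ≤ R and |z₂| ≤ R one has ∫_X |F(z₁, x) − F(z₂, x)|² ν(dx) ≤ C|z₁ − z₂|², and (b) ∫_X |F(0, x)|² ν(dx) ≤ B. Then for all z₁, z₂ ∈ ℝᵈ with |z₁| ≤ R and R ≤ |z₂| ≤ 2R one has ∫_X |F(z₁, x) − ((2R − |z₂|)/R) · F(R·z₂/|z₂|, x)|² ν(dx) ≤ (6C + 4B/R²) · |z₁ − z₂|². -/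
/-!
Let `w = (R / |z₂|) z₂` be the radial retraction of `z₂` onto the ball of radius `R` and
`s = (|z₂| - R) / R`, so that the integrand is `F(z₁) - F(w) + s F(w)`. Two uses of
`|a + b|² ≤ 2|a|² + 2|b|²` give the bound: first `∫ |F(w)|² ≤ 2CR² + 2B` from (a) and (b),
then `∫ |F(z₁) - F(w)|² ≤ C |z₁ - w|²`. Finally `|z₁ - w| ≤ |z₁ - z₂|` because the retraction
does not increase distances to points of the ball, and `sR = |z₂| - R ≤ |z₁ - z₂|`.
-/

open MeasureTheory

theorem enorm_add_sq_le {E : Type*} [SeminormedAddCommGroup E] (a b : E) :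
    ‖a + b‖ₑ ^ 2 ≤ 2 * (‖a‖ₑ ^ 2 + ‖b‖ₑ ^ 2) := by
  simp only [enorm_eq_nnnorm]
  exact_mod_cast (pow_le_pow_left₀ (by positivity) (nnnorm_add_le a b) 2).trans add_sq_le

theorem norm_sub_div_norm_smul_sq_le {E : Type*} [NormedAddCommGroup E] [InnerProductSpace ℝ E]
    {x y : E} {R : ℝ} (hR : 0 < R) (hx : ‖x‖ ≤ R) (hy : R ≤ ‖y‖) :
    ‖x - (R / ‖y‖) • y‖ ^ 2 ≤ ‖x - y‖ ^ 2 := by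
  have hy₀ : 0 < ‖y‖ := hR.trans_le hy
  have hc₀ : 0 ≤ R / ‖y‖ := by positivity
  have hc₁ : R / ‖y‖ ≤ 1 := (div_le_one hy₀).2 hy
  have hcy : R / ‖y‖ * ‖y‖ = R := div_mul_cancel₀ _ hy₀.ne'
  have hxy : inner ℝ x y ≤ R * ‖y‖ :=
    (real_inner_le_norm x y).trans (mul_le_mul_of_nonneg_right hx (norm_nonneg y))
  rw [norm_sub_sq_real, norm_sub_sq_real, real_inner_smul_right, norm_smul,
    Real.norm_of_nonneg hc₀]
  -- the difference of the two sides is `2 (1 - R / ‖y‖) (R ‖y‖ - ⟪x, y⟫) ≥ 0`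
  nlinarith [mul_nonneg (sub_nonneg.2 hc₁) (sub_nonneg.2 hxy)]

section

variable {X E : Type*} [MeasurableSpace X] {μ : Measure X} [SeminormedAddCommGroup E]

theorem lintegral_enorm_add_sq_le (f : X → E) {g : X → E} (hg : AEStronglyMeasurable g μ) :
    ∫⁻ x, ‖f x + g x‖ₑ ^ 2 ∂μ ≤ 2 * (∫⁻ x, ‖f x‖ₑ ^ 2 ∂μ + ∫⁻ x, ‖g x‖ₑ ^ 2 ∂μ) :=
  calc ∫⁻ x, ‖f x + g x‖ₑ ^ 2 ∂μ ≤ ∫⁻ x, 2 * (‖f x‖ₑ ^ 2 + ‖g x‖ₑ ^ 2) ∂μ :=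
        lintegral_mono fun x => enorm_add_sq_le (f x) (g x)
    _ = 2 * (∫⁻ x, ‖f x‖ₑ ^ 2 ∂μ + ∫⁻ x, ‖g x‖ₑ ^ 2 ∂μ) := by
        rw [lintegral_const_mul' _ _ ENNReal.ofNat_ne_top,
          lintegral_add_right' _ (hg.enorm.pow_const 2)]

theorem lintegral_enorm_add_sq_le_ofReal {f g : X → E} (hg : AEStronglyMeasurable g μ) {a b : ℝ}
    (ha₀ : 0 ≤ a) (hb₀ : 0 ≤ b) (ha : ∫⁻ x, ‖f x‖ₑ ^ 2 ∂μ ≤ ENNReal.ofReal a)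
    (hb : ∫⁻ x, ‖g x‖ₑ ^ 2 ∂μ ≤ ENNReal.ofReal b) :
    ∫⁻ x, ‖f x + g x‖ₑ ^ 2 ∂μ ≤ ENNReal.ofReal (2 * (a + b)) :=
  calc ∫⁻ x, ‖f x + g x‖ₑ ^ 2 ∂μ ≤ 2 * (ENNReal.ofReal a + ENNReal.ofReal b) :=
        (lintegral_enorm_add_sq_le _ hg).trans (by gcongr)
    _ = ENNReal.ofReal (2 * (a + b)) := by
        rw [← ENNReal.ofReal_add ha₀ hb₀, ENNReal.ofReal_mul zero_le_two, ENNReal.ofReal_ofNat]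

theorem lintegral_enorm_smul_sq [NormedSpace ℝ E] (c : ℝ) (f : X → E) :
    ∫⁻ x, ‖c • f x‖ₑ ^ 2 ∂μ = ENNReal.ofReal (c ^ 2) * ∫⁻ x, ‖f x‖ₑ ^ 2 ∂μ := by
  have hc : ‖c‖ₑ ^ 2 = ENNReal.ofReal (c ^ 2) := by
    rw [Real.enorm_eq_ofReal_abs, ← ENNReal.ofReal_pow (abs_nonneg c), sq_abs]
  simp_rw [enorm_smul, mul_pow, hc]
  exact lintegral_const_mul' _ _ ENNReal.ofReal_ne_top

end

theorem stmt_4_general {X : Type*} [MeasurableSpace X] (ν : Measure X)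
    (d : ℕ) (R C B : ℝ) (hR : 0 < R) (hC : 0 ≤ C) (hB : 0 ≤ B)
    (F : EuclideanSpace ℝ (Fin d) → X → EuclideanSpace ℝ (Fin d))
    (hmeas : ∀ z, Measurable fun x => F z x)
    (ha : ∀ z₁ z₂ : EuclideanSpace ℝ (Fin d), ‖z₁‖ ≤ R → ‖z₂‖ ≤ R →
      ∫⁻ x, (‖F z₁ x - F z₂ x‖₊ : ENNReal) ^ 2 ∂ν ≤ ENNReal.ofReal (C * ‖z₁ - z₂‖ ^ 2))
    (hb : ∫⁻ x, (‖F 0 x‖₊ : ENNReal) ^ 2 ∂ν ≤ ENNReal.ofReal B) :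
    ∀ z₁ z₂ : EuclideanSpace ℝ (Fin d), ‖z₁‖ ≤ R → R ≤ ‖z₂‖ → ‖z₂‖ ≤ 2 * R →
      ∫⁻ x, (‖F z₁ x - ((2 * R - ‖z₂‖) / R) • F ((R / ‖z₂‖) • z₂) x‖₊ : ENNReal) ^ 2 ∂ν
        ≤ ENNReal.ofReal ((6 * C + 4 * B / R ^ 2) * ‖z₁ - z₂‖ ^ 2) := by
  intro z₁ z₂ h₁ h₂ _
  simp only [← enorm_eq_nnnorm] at ha hb ⊢
  set w := (R / ‖z₂‖) • z₂
  set s := (‖z₂‖ - R) / R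
  have hw : ‖w‖ = R := by
    rw [norm_smul, Real.norm_of_nonneg (by positivity), div_mul_cancel₀ _ (hR.trans_le h₂).ne']
  have hFw : ∫⁻ x, ‖F w x‖ₑ ^ 2 ∂ν ≤ ENNReal.ofReal (2 * (C * R ^ 2 + B)) := by
    have hFw0 := ha w 0 hw.le (by simpa using hR.le)
    rw [sub_zero, hw] at hFw0
    simpa only [sub_add_cancel] using
      lintegral_enorm_add_sq_le_ofReal (hmeas 0).aestronglyMeasurable (by positivity) hB hFw0 hb
  have hsplit (x : X) :
      F z₁ x - ((2 * R - ‖z₂‖) / R) • F w x = (F z₁ x - F w x) + s • F w x := by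
    have hcoeff : (2 * R - ‖z₂‖) / R = 1 - s := by simp only [s]; field_simp; ring
    rw [hcoeff]
    module
  have hdist : ‖z₁ - w‖ ^ 2 ≤ ‖z₁ - z₂‖ ^ 2 := norm_sub_div_norm_smul_sq_le hR h₁ h₂
  have hsR : s ^ 2 * R ^ 2 ≤ ‖z₁ - z₂‖ ^ 2 := by
    rw [← mul_pow, show s * R = ‖z₂‖ - R by simp only [s]; field_simp]
    have := norm_sub_norm_le z₂ z₁
    rw [norm_sub_rev] at this
    exact pow_le_pow_left₀ (by linarith) (by linarith) 2
  have hs : s ^ 2 ≤ ‖z₁ - z₂‖ ^ 2 / R ^ 2 := by rwa [le_div_iff₀ (by positivity)]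
  calc ∫⁻ x, ‖F z₁ x - ((2 * R - ‖z₂‖) / R) • F w x‖ₑ ^ 2 ∂ν
      = ∫⁻ x, ‖(F z₁ x - F w x) + s • F w x‖ₑ ^ 2 ∂ν := by simp_rw [hsplit]
    _ ≤ ENNReal.ofReal (2 * (C * ‖z₁ - w‖ ^ 2 + s ^ 2 * (2 * (C * R ^ 2 + B)))) := by
        refine lintegral_enorm_add_sq_le_ofReal (g := fun x => s • F w x)
          ((hmeas w).aestronglyMeasurable.const_smul s)
          (by positivity) (by positivity) (ha z₁ w h₁ hw.le) ?_
        rw [lintegral_enorm_smul_sq, ENNReal.ofReal_mul (by positivity)]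
        gcongr
    _ ≤ ENNReal.ofReal ((6 * C + 4 * B / R ^ 2) * ‖z₁ - z₂‖ ^ 2) := by
        refine ENNReal.ofReal_le_ofReal ?_
        linear_combination 2 * mul_le_mul_of_nonneg_left hdist hC +
          4 * mul_le_mul_of_nonneg_left hsR hC + 4 * mul_le_mul_of_nonneg_left hs hB

theorem stmt_4 {X : Type*} [MeasurableSpace X] (ν : Measure X)
    (d : ℕ) (hd : 0 < d) (R C B : ℝ) (hR : 0 < R) (hC : 0 ≤ C) (hB : 0 ≤ B)
    (F : EuclideanSpace ℝ (Fin d) → X → EuclideanSpace ℝ (Fin d))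
    (hmeas : ∀ z, Measurable fun x => F z x)
    (ha : ∀ z₁ z₂ : EuclideanSpace ℝ (Fin d), ‖z₁‖ ≤ R → ‖z₂‖ ≤ R →
      ∫⁻ x, (‖F z₁ x - F z₂ x‖₊ : ENNReal) ^ 2 ∂ν ≤ ENNReal.ofReal (C * ‖z₁ - z₂‖ ^ 2))
    (hb : ∫⁻ x, (‖F 0 x‖₊ : ENNReal) ^ 2 ∂ν ≤ ENNReal.ofReal B) :
    ∀ z₁ z₂ : EuclideanSpace ℝ (Fin d), ‖z₁‖ ≤ R → R ≤ ‖z₂‖ → ‖z₂‖ ≤ 2 * R →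
      ∫⁻ x, (‖F z₁ x - ((2 * R - ‖z₂‖) / R) • F ((R / ‖z₂‖) • z₂) x‖₊ : ENNReal) ^ 2 ∂ν
        ≤ ENNReal.ofReal ((6 * C + 4 * B / R ^ 2) * ‖z₁ - z₂‖ ^ 2) :=
  stmt_4_general ν d R C B hR hC hB F hmeas ha hb
end
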